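/- Let s ≥ 6 be even and let a, b be odd integers with a ≡ b (mod 8). Then S(a,b;2^s) = ∑_{x mod 2^s, a − b·x^(−2) ≡ 0 (mod 2^(s/2))} e((ax + b x̄)/2^s), i.e., the Kloosterman sum modulo 2^s localizes to the stationary points of the phase. -/

import Mathlib

/-!
Write `q = m * m` and split a residue as `x = y + m z` with `y, z < m`. Since `m² = 0` in
`ZMod q`, inversion is linear in `z`: `(y + m z)⁻¹ = y⁻¹ - m z y⁻²`, so the phase
`a x + b x⁻¹` equals `a y + b y⁻¹ + z · m (a - b y⁻²)`. Summing over `z` gives a complete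
geometric sum of the nontrivial character `z ↦ e_q(z · m (a - b y⁻²))`, which vanishes unless
`m (a - b y⁻²) = 0` in `ZMod q`, i.e. unless `a - b y⁻² ≡ 0 (mod m)`; this condition and the
coprimality of `x` depend only on `y`.
-/

open scoped BigOperators Classical

/-- `e_q(x) = exp(2πi x/q)` for `x : ZMod q`. -/
noncomputable def eZMod (q : ℕ) (x : ZMod q) : ℂ :=
  Complex.exp (2 * Real.pi * Complex.I * (x.val : ℂ) / q)

/-- The (unnormalized) Kloosterman sum `S(a,b;q) = ∑*_{x mod q} e_q(ax + b x̄)`. -/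
noncomputable def klS (a b : ℤ) (q : ℕ) : ℂ :=
  ∑ x ∈ (Finset.range q).filter (fun x => Nat.Coprime x q),
    eZMod q ((a : ZMod q) * (x : ZMod q) + (b : ZMod q) * (x : ZMod q)⁻¹)

open Finset

theorem Finset.sum_range_mul_eq_sum_sum {M : Type*} [AddCommMonoid M] (f : ℕ → M) (m n : ℕ) :
    ∑ x ∈ range (m * n), f x = ∑ y ∈ range n, ∑ z ∈ range m, f (y + n * z) := by
  rw [sum_range, ← finProdFinEquiv.sum_comp, Fintype.sum_prod_type, sum_comm]
  simp only [sum_range]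
  rfl

theorem AddChar.sum_range_nsmul_eq_zero {A R : Type*} [AddMonoid A] [DivisionRing R]
    (ψ : AddChar A R) {d : A} {m : ℕ} (hψ : ψ d ≠ 1) (hm : m • d = 0) :
    ∑ z ∈ range m, ψ (z • d) = 0 := by
  simp only [AddChar.map_nsmul_eq_pow]
  rw [geom_sum_eq hψ, ← AddChar.map_nsmul_eq_pow, hm, AddChar.map_zero_eq_one, sub_self, zero_div]

theorem eZMod_eq_stdAddChar (q : ℕ) [NeZero q] : eZMod q = ZMod.stdAddChar := by
  funext x
  rw [ZMod.stdAddChar_apply, ZMod.toCircle_apply]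
  rfl

namespace ZMod

variable {q m : ℕ}

theorem natCast_mul_self_eq_zero (hq : m * m = q) : (m : ZMod q) * m = 0 := by
  rw [← Nat.cast_mul, hq, natCast_self]

theorem natCast_mul_intCast_eq_zero_iff [NeZero q] (hq : m * m = q) (n : ℤ) :
    (m : ZMod q) * n = 0 ↔ n ≡ 0 [ZMOD m] := by
  have hm : (m : ℤ) ≠ 0 := by
    rintro h
    exact NeZero.ne q (by rw [← hq, Int.natCast_eq_zero.mp h, zero_mul])
  rw [← Int.cast_natCast, ← Int.cast_mul, intCast_zmod_eq_zero_iff_dvd, Int.modEq_zero_iff_dvd,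
    ← hq, Nat.cast_mul, mul_dvd_mul_iff_left hm]

theorem inv_add_natCast_mul (hq : m * m = q) {y : ZMod q} (hy : IsUnit y) (z : ZMod q) :
    (y + m * z)⁻¹ = y⁻¹ - m * z * y⁻¹ ^ 2 := by
  apply ZMod.inv_eq_of_mul_eq_one
  linear_combination (1 - (m : ZMod q) * z * y⁻¹) * mul_inv_of_unit y hy
    - (z ^ 2 * y⁻¹ ^ 2) * natCast_mul_self_eq_zero hq

theorem mul_add_inv_add_natCast_mul (hq : m * m = q) {y : ZMod q} (hy : IsUnit y)
    (a b z : ZMod q) :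
    a * (y + m * z) + b * (y + m * z)⁻¹ = a * y + b * y⁻¹ + z * (m * (a - b * y⁻¹ ^ 2)) := by
  rw [inv_add_natCast_mul hq hy]
  ring

theorem natCast_mul_sub_mul_inv_add_natCast_mul_sq (hq : m * m = q) {y : ZMod q} (hy : IsUnit y)
    (a b z : ZMod q) :
    m * (a - b * (y + m * z)⁻¹ ^ 2) = m * (a - b * y⁻¹ ^ 2) := by
  rw [inv_add_natCast_mul hq hy]
  linear_combination (b * z * y⁻¹ ^ 3 * (2 - m * z * y⁻¹)) * natCast_mul_self_eq_zero hq

end ZMod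

section StationaryPhase

variable {q m : ℕ} [NeZero q]

theorem sum_range_eZMod_add_natCast_mul_eq_zero (hq : m * m = q) {y : ZMod q} (hy : IsUnit y)
    (a b : ZMod q) (hd : (m : ZMod q) * (a - b * y⁻¹ ^ 2) ≠ 0) :
    ∑ z ∈ range m, eZMod q (a * (y + m * z) + b * (y + m * z)⁻¹) = 0 := by
  set d := (m : ZMod q) * (a - b * y⁻¹ ^ 2)
  have hψ : ZMod.stdAddChar d ≠ 1 := fun h =>
    hd (ZMod.injective_stdAddChar (h.trans (AddChar.map_zero_eq_one _).symm))
  have hmd : m • d = 0 := by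
    rw [nsmul_eq_mul, ← mul_assoc, ZMod.natCast_mul_self_eq_zero hq, zero_mul]
  have hphase (z : ℕ) : eZMod q (a * (y + m * z) + b * (y + m * z)⁻¹) =
      eZMod q (a * y + b * y⁻¹) * ZMod.stdAddChar (z • d) := by
    rw [ZMod.mul_add_inv_add_natCast_mul hq hy, eZMod_eq_stdAddChar, AddChar.map_add_eq_mul,
      nsmul_eq_mul]
  rw [sum_congr rfl fun z _ => hphase z, ← mul_sum,
    AddChar.sum_range_nsmul_eq_zero _ hψ hmd, mul_zero]

theorem sum_coprime_eZMod_eq_sum_stationary (hq : m * m = q) (a b : ZMod q) :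
    ∑ x ∈ (range q).filter (fun x => Nat.Coprime x q), eZMod q (a * x + b * (x : ZMod q)⁻¹) =
      ∑ x ∈ (range q).filter
          (fun x => Nat.Coprime x q ∧ (m : ZMod q) * (a - b * (x : ZMod q)⁻¹ ^ 2) = 0),
        eZMod q (a * x + b * (x : ZMod q)⁻¹) := by
  set P : ℕ → Prop := fun x => (m : ZMod q) * (a - b * (x : ZMod q)⁻¹ ^ 2) = 0
  have hcoprime (y z : ℕ) : Nat.Coprime (y + m * z) q ↔ Nat.Coprime y q := by
    rw [← hq, Nat.coprime_mul_iff_right, Nat.coprime_mul_iff_right, and_self, and_self,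
      Nat.coprime_add_mul_left_left]
  have hP (y z : ℕ) (hy : Nat.Coprime y q) : P (y + m * z) ↔ P y := by
    simp only [P, Nat.cast_add, Nat.cast_mul,
      ZMod.natCast_mul_sub_mul_inv_add_natCast_mul_sq hq ((ZMod.isUnit_iff_coprime y q).2 hy)]
  rw [← filter_filter, ← sum_filter_add_sum_filter_not _ P, add_eq_left,
    filter_filter, sum_filter, show range q = range (m * m) by rw [hq],
    Finset.sum_range_mul_eq_sum_sum]
  refine sum_eq_zero fun y _ => ?_
  by_cases hy : Nat.Coprime y q
  · simp_rw [hcoprime, hP _ _ hy]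
    by_cases hPy : P y
    · simp [hPy]
    · simp only [if_pos (And.intro hy hPy), Nat.cast_add, Nat.cast_mul]
      exact sum_range_eZMod_add_natCast_mul_eq_zero hq ((ZMod.isUnit_iff_coprime y q).2 hy) a b hPy
  · simp [hcoprime, hy]

end StationaryPhase

theorem stmt_7_general (s : ℕ) (hse : Even s) (a b : ℤ) :
    klS a b (2 ^ s) =
      ∑ x ∈ (Finset.range (2 ^ s)).filter (fun x => Nat.Coprime x (2 ^ s) ∧
          a - b * ((((x : ZMod (2 ^ s))⁻¹).val : ℤ)) ^ 2 ≡ 0 [ZMOD (2 ^ (s / 2))]),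
        eZMod (2 ^ s) ((a : ZMod (2 ^ s)) * (x : ZMod (2 ^ s))
          + (b : ZMod (2 ^ s)) * (x : ZMod (2 ^ s))⁻¹) := by
  have hq : 2 ^ (s / 2) * 2 ^ (s / 2) = 2 ^ s := by
    obtain ⟨t, rfl⟩ := hse
    rw [← pow_add]
    congr 1
    omega
  rw [klS, sum_coprime_eZMod_eq_sum_stationary hq]
  refine sum_congr (filter_congr fun x _ => and_congr_right fun _ => ?_) fun _ _ => rfl
  have hcast : ((a - b * ((x : ZMod (2 ^ s))⁻¹.val : ℤ) ^ 2 : ℤ) : ZMod (2 ^ s)) =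
      a - b * (x : ZMod (2 ^ s))⁻¹ ^ 2 := by
    push_cast [ZMod.natCast_val, ZMod.cast_id]
    rfl
  rw [← hcast, ZMod.natCast_mul_intCast_eq_zero_iff hq, Nat.cast_pow, Nat.cast_ofNat]

/-- For `s ≥ 6` even and odd `a ≡ b (mod 8)`, the Kloosterman sum modulo `2^s` localizes
to the stationary points `x` with `a − b·x⁻² ≡ 0 (mod 2^(s/2))`. -/
theorem stmt_7 (s : ℕ) (hs : 6 ≤ s) (hse : Even s) (a b : ℤ)
    (ha : Odd a) (hb : Odd b) (hab : a ≡ b [ZMOD 8]) :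
    klS a b (2 ^ s) =
      ∑ x ∈ (Finset.range (2 ^ s)).filter (fun x => Nat.Coprime x (2 ^ s) ∧
          a - b * ((((x : ZMod (2 ^ s))⁻¹).val : ℤ)) ^ 2 ≡ 0 [ZMOD (2 ^ (s / 2))]),
        eZMod (2 ^ s) ((a : ZMod (2 ^ s)) * (x : ZMod (2 ^ s))
          + (b : ZMod (2 ^ s)) * (x : ZMod (2 ^ s))⁻¹) :=
  stmt_7_general s hse a b
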